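/- For every nonnegative integer s: d₄(21s + 11, 3) = 16s + 7, d₄(21s + 16, 3) = 16s + 11, and d₄(21s + 20, 3) = 16s + 14; that is, for each of these lengths n and corresponding values d there exists a quaternary Hermitian LCD [n,3] code with minimum weight d, and every quaternary Hermitian LCD [n,3] code has minimum weight at most d. -/

import Mathlib

open scoped Classical

noncomputable section

/-- The finite field with four elements. -/
abbrev F4 := GaloisField 2 2

/-- The (Hamming) weight of a vector over `F4`: the number of nonzero coordinates. -/
def wt {n : ℕ} (x : Fin n → F4) : ℕ :=
  (Finset.univ.filter (fun i => x i ≠ 0)).card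

/-- Hermitian inner product on `F4^n`: `∑ i, x i * (conj (y i))` with `conj z = z^2`. -/
def hermInner {n : ℕ} (x y : Fin n → F4) : F4 :=
  ∑ i, x i * (y i) ^ 2

/-- Membership in the Hermitian dual `C^{⊥H}` of a code `C`. -/
def inHermDual {n : ℕ} (C : Submodule F4 (Fin n → F4)) (x : Fin n → F4) : Prop :=
  ∀ y ∈ C, hermInner x y = 0

/-- `C` is Hermitian LCD: `C ∩ C^{⊥H} = {0}`. -/
def IsHermLCD {n : ℕ} (C : Submodule F4 (Fin n → F4)) : Prop :=
  ∀ x ∈ C, inHermDual C x → x = 0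

/-- `C` has minimum weight (exactly) `d`. -/
def minWtIs {n : ℕ} (C : Submodule F4 (Fin n → F4)) (d : ℕ) : Prop :=
  (∃ x ∈ C, x ≠ 0 ∧ wt x = d) ∧ ∀ x ∈ C, x ≠ 0 → d ≤ wt x

/-- `C` is a quaternary Hermitian LCD `[n,k,d]` code. -/
def IsHermLCDCode (n k d : ℕ) (C : Submodule F4 (Fin n → F4)) : Prop :=
  Module.finrank F4 C = k ∧ IsHermLCD C ∧ minWtIs C d

/-- `d₄(n,k) = d`: the largest minimum weight among quaternary Hermitian LCD `[n,k]` codes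
is `d`. -/
def d4Is (n k d : ℕ) : Prop :=
  (∃ C : Submodule F4 (Fin n → F4), IsHermLCDCode n k d C) ∧
  (∀ C : Submodule F4 (Fin n → F4), Module.finrank F4 C = k → IsHermLCD C →
    ∃ x ∈ C, x ≠ 0 ∧ wt x ≤ d)

end

/-!
For the upper bound, let `C` be a Hermitian LCD `[n,3]` code. The form `hermInner` is
nondegenerate on `C`, and a nondegenerate Hermitian form over `F4` has an orthonormal basis
(a totally isotropic subspace is totally orthogonal, because the trace `t ↦ t + t²` of `F4` is
nonzero). Hence `C` is isometric to `F4³`; as `hermInner x x` is the weight of `x` modulo 2, `C`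
has exactly 27 nonzero codewords of even weight and 36 of odd weight. Each coordinate vanishes on
a quarter of `C` or on all of it, so the 63 nonzero weights sum to at most `48 n`. If every
nonzero weight is at least `D`, this gives `63 D + 27 ≤ 48 n`, and `63 D + 36 ≤ 48 n` when `D` is
even, which rules out minimum weight above `d` for the three pairs `(n, d)`.

For the lower bound, explicit Hermitian LCD `[11,3,7]`, `[16,3,11]` and `[20,3,14]` codes are
lengthened `s` times by the `[21,3,16]` simplex code, which is Hermitian self-orthogonal with all
nonzero weights equal to 16. The finitely many checks on these matrices are run by `decide` in a
computable copy `K4` of `F4`.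
-/

open Matrix
open scoped Finset

-- `ω' = ω² = ω + 1`
inductive K4
  | zero | one | ω | ω'
  deriving DecidableEq

namespace K4

instance : Fintype K4 := ⟨{zero, one, ω, ω'}, fun x => by cases x <;> decide⟩

instance : Zero K4 := ⟨zero⟩
instance : One K4 := ⟨one⟩
instance : Neg K4 := ⟨id⟩

instance : Add K4 where
  add
    | zero, x | x, zero => x
    | one, one | ω, ω | ω', ω' => zero
    | one, ω | ω, one => ω'
    | one, ω' | ω', one => ω
    | ω, ω' | ω', ω => one

instance : Mul K4 where
  mul
    | zero, _ | _, zero => zero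
    | one, x | x, one => x
    | ω, ω => ω'
    | ω', ω' => ω
    | ω, ω' | ω', ω => one

instance : Inv K4 where
  inv
    | ω => ω'
    | ω' => ω
    | x => x

instance : Field K4 where
  add_assoc := by decide
  zero_add := by decide
  add_zero := by decide
  add_comm := by decide
  mul_assoc := by decide
  one_mul := by decide
  mul_one := by decide
  zero_mul := by decide
  mul_zero := by decide
  left_distrib := by decide
  right_distrib := by decide
  mul_comm := by decide
  neg_add_cancel := by decide
  nsmul := nsmulRec
  zsmul := zsmulRec
  exists_pair_ne := ⟨0, 1, by decide⟩
  mul_inv_cancel := by decide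
  inv_zero := by decide
  nnqsmul := _
  qsmul := _

end K4

noncomputable instance : Fintype F4 := Fintype.ofFinite _

theorem card_F4 : Fintype.card F4 = 4 := by
  rw [Fintype.card_eq_nat_card, GaloisField.card 2 2 two_ne_zero]; rfl

noncomputable def K4.equivF4 : K4 ≃+* F4 := FiniteField.ringEquivOfCardEq (by rw [card_F4]; rfl)

theorem exists_add_sq_ne_zero : ∃ b : F4, b + b ^ 2 ≠ 0 :=
  ⟨K4.equivF4 .ω, by rw [← map_pow, ← map_add]; exact (map_ne_zero _).mpr (by decide)⟩

theorem eq_zero_of_forall_mul_add_sq {t : F4} (h : ∀ a, a * t + (a * t) ^ 2 = 0) : t = 0 := by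
  by_contra ht
  obtain ⟨b, hb⟩ := exists_add_sq_ne_zero
  exact hb (by simpa [div_mul_cancel₀ b ht] using h (b / t))

section Hermitian

variable {n : ℕ}

theorem hermInner_zero_left (y : Fin n → F4) : hermInner 0 y = 0 := by
  simp [hermInner]

theorem hermInner_add_left (x x' y : Fin n → F4) :
    hermInner (x + x') y = hermInner x y + hermInner x' y := by
  simp only [hermInner, Pi.add_apply, add_mul, Finset.sum_add_distrib]

theorem hermInner_sub_left (x x' y : Fin n → F4) :
    hermInner (x - x') y = hermInner x y - hermInner x' y := by
  simp only [hermInner, Pi.sub_apply, sub_mul, Finset.sum_sub_distrib]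

theorem hermInner_smul_left (a : F4) (x y : Fin n → F4) :
    hermInner (a • x) y = a * hermInner x y := by
  simp only [hermInner, Pi.smul_apply, smul_eq_mul, Finset.mul_sum, mul_assoc]

theorem hermInner_sum_left {ι : Type*} (s : Finset ι) (x : ι → Fin n → F4) (y : Fin n → F4) :
    hermInner (∑ i ∈ s, x i) y = ∑ i ∈ s, hermInner (x i) y := by
  simp only [hermInner, Finset.sum_apply, Finset.sum_mul]
  exact Finset.sum_comm

theorem hermInner_add_right (x y y' : Fin n → F4) :
    hermInner x (y + y') = hermInner x y + hermInner x y' := by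
  simp only [hermInner, Pi.add_apply, CharTwo.add_sq, mul_add, Finset.sum_add_distrib]

theorem hermInner_smul_right (a : F4) (x y : Fin n → F4) :
    hermInner x (a • y) = a ^ 2 * hermInner x y := by
  simp only [hermInner, Pi.smul_apply, smul_eq_mul, Finset.mul_sum, mul_pow]
  exact Finset.sum_congr rfl fun _ _ => by ring

theorem hermInner_sum_right {ι : Type*} (s : Finset ι) (x : Fin n → F4) (y : ι → Fin n → F4) :
    hermInner x (∑ i ∈ s, y i) = ∑ i ∈ s, hermInner x (y i) := by
  simp only [hermInner, Finset.sum_apply, CharTwo.sum_sq, Finset.mul_sum]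
  exact Finset.sum_comm

theorem hermInner_swap (x y : Fin n → F4) : hermInner y x = hermInner x y ^ 2 := by
  simp only [hermInner, CharTwo.sum_sq, mul_pow, ← pow_mul]
  refine Finset.sum_congr rfl fun i _ => ?_
  rw [show 2 * 2 = Fintype.card F4 by rw [card_F4], FiniteField.pow_card, mul_comm]

theorem hermInner_self (x : Fin n → F4) : hermInner x x = wt x := by
  rw [hermInner, wt, Finset.card_filter, Nat.cast_sum]
  refine Finset.sum_congr rfl fun i _ => ?_
  split_ifs with hx
  · rw [Nat.cast_one, ← pow_succ', show 2 + 1 = Fintype.card F4 - 1 by rw [card_F4],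
      FiniteField.pow_card_sub_one_eq_one _ hx]
  · simp [not_not.mp hx]

theorem even_wt_iff (x : Fin n → F4) : Even (wt x) ↔ hermInner x x = 0 := by
  rw [hermInner_self, CharP.cast_eq_zero_iff F4 2, even_iff_two_dvd]

theorem hermInner_self_eq_zero_or_one (x : Fin n → F4) :
    hermInner x x = 0 ∨ hermInner x x = 1 := by
  rw [hermInner_self, ← Nat.mod_add_div (wt x) 2]
  rcases Nat.mod_two_eq_zero_or_one (wt x) with h | h <;> simp [h, CharTwo.two_eq_zero]

theorem hermInner_eq_zero_of_isotropic (W : Submodule F4 (Fin n → F4))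
    (hW : ∀ w ∈ W, hermInner w w = 0) {w w' : Fin n → F4} (hw : w ∈ W) (hw' : w' ∈ W) :
    hermInner w w' = 0 := by
  refine eq_zero_of_forall_mul_add_sq fun a => ?_
  have h := hW (a • w + w') (W.add_mem (W.smul_mem a hw) hw')
  simp only [hermInner_add_left, hermInner_add_right, hermInner_smul_left, hermInner_smul_right,
    hW w hw, hW w' hw'] at h
  rw [hermInner_swap w w'] at h
  linear_combination h

end Hermitian

section Generator

variable {k n : ℕ}

-- Equivalently, the Gram matrix `(hermInner (G i) (G j))ᵢⱼ` is nonsingular.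
def GeneratesHermLCD (G : Matrix (Fin k) (Fin n) F4) : Prop :=
  ∀ y, (∀ i, hermInner (y ᵥ* G) (G i) = 0) → y = 0

theorem GeneratesHermLCD.exists_code {G : Matrix (Fin k) (Fin n) F4} (hG : GeneratesHermLCD G)
    {d : ℕ} (hd : ∀ y, y ≠ 0 → d ≤ wt (y ᵥ* G)) :
    ∃ C : Submodule F4 (Fin n → F4),
      Module.finrank F4 C = k ∧ IsHermLCD C ∧ ∀ x ∈ C, x ≠ 0 → d ≤ wt x := by
  have hinj : Function.Injective G.vecMulLinear := by
    rw [← LinearMap.ker_eq_bot, LinearMap.ker_eq_bot']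
    exact fun y hy => hG y fun i => by simp [show y ᵥ* G = 0 from hy, hermInner_zero_left]
  refine ⟨LinearMap.range G.vecMulLinear, ?_, ?_, ?_⟩
  · rw [LinearMap.finrank_range_of_inj hinj, Module.finrank_fin_fun]
  · rintro _ ⟨y, rfl⟩ hy
    rw [hG y fun i => hy _ ⟨Pi.single i 1, by simp; rfl⟩, map_zero]
  · rintro _ ⟨y, rfl⟩ hx
    exact hd y (by rintro rfl; exact hx (map_zero _))

theorem d4Is_of_generator {G : Matrix (Fin k) (Fin n) F4} (hG : GeneratesHermLCD G) {d : ℕ}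
    (hd : ∀ y, y ≠ 0 → d ≤ wt (y ᵥ* G))
    (hub : ∀ C : Submodule F4 (Fin n → F4), Module.finrank F4 C = k → IsHermLCD C →
      ∃ x ∈ C, x ≠ 0 ∧ wt x ≤ d) :
    d4Is n k d := by
  obtain ⟨C, hk, hC, hCd⟩ := hG.exists_code hd
  obtain ⟨x, hx, hx0, hxd⟩ := hub C hk hC
  exact ⟨⟨C, hk, hC, ⟨x, hx, hx0, le_antisymm hxd (hCd x hx hx0)⟩, hCd⟩, hub⟩

theorem vecMul_append {R : Type*} [Semiring R] {m l : ℕ} (y : Fin k → R)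
    (G : Matrix (Fin k) (Fin m) R) (S : Matrix (Fin k) (Fin l) R) :
    y ᵥ* Matrix.of (fun i => Fin.append (G i) (S i)) = Fin.append (y ᵥ* G) (y ᵥ* S) := by
  ext j
  refine Fin.addCases (fun j => ?_) (fun j => ?_) j <;> simp [vecMul, dotProduct]

theorem wt_append {m l : ℕ} (x : Fin m → F4) (z : Fin l → F4) :
    wt (Fin.append x z) = wt x + wt z := by
  simp [wt, Finset.card_filter, Fin.sum_univ_add]

theorem hermInner_append {m l : ℕ} (x x' : Fin m → F4) (z z' : Fin l → F4) :
    hermInner (Fin.append x z) (Fin.append x' z') = hermInner x x' + hermInner z z' := by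
  simp [hermInner, Fin.sum_univ_add]

theorem hermInner_vecMul_left (y : Fin k → F4) (G : Matrix (Fin k) (Fin n) F4) (z : Fin n → F4) :
    hermInner (y ᵥ* G) z = ∑ i, y i * hermInner (G i) z := by
  simp [vecMul_eq_sum, hermInner_sum_left, hermInner_smul_left]

theorem GeneratesHermLCD.append {m l : ℕ} {G : Matrix (Fin k) (Fin m) F4}
    (hG : GeneratesHermLCD G) {S : Matrix (Fin k) (Fin l) F4}
    (hS : ∀ i j, hermInner (S i) (S j) = 0) :
    GeneratesHermLCD (Matrix.of fun i => Fin.append (G i) (S i)) := fun y hy =>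
  hG y fun i => by
    have h : hermInner (Fin.append (y ᵥ* G) (y ᵥ* S)) (Fin.append (G i) (S i)) = 0 := by
      rw [← vecMul_append]; exact hy i
    simpa [hermInner_append, hermInner_vecMul_left y S, hS] using h

theorem exists_generator_lengthen {l w : ℕ} {S : Matrix (Fin k) (Fin l) F4}
    (hS : ∀ i j, hermInner (S i) (S j) = 0) (hSw : ∀ y, y ≠ 0 → wt (y ᵥ* S) = w)
    {m d : ℕ} {G : Matrix (Fin k) (Fin m) F4} (hG : GeneratesHermLCD G)
    (hd : ∀ y, y ≠ 0 → d ≤ wt (y ᵥ* G)) (s : ℕ) :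
    ∃ G' : Matrix (Fin k) (Fin (l * s + m)) F4,
      GeneratesHermLCD G' ∧ ∀ y, y ≠ 0 → w * s + d ≤ wt (y ᵥ* G') := by
  induction s with
  | zero =>
    rw [mul_zero, zero_add, mul_zero, zero_add]
    exact ⟨G, hG, hd⟩
  | succ s ih =>
    obtain ⟨G', hG', hd'⟩ := ih
    rw [show l * (s + 1) + m = l * s + m + l by ring]
    refine ⟨Matrix.of fun i => Fin.append (G' i) (S i), hG'.append hS, fun y hy => ?_⟩
    rw [vecMul_append, wt_append, hSw y hy]
    linarith [hd' y hy]

end Generator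

section Transport

variable {K : Type*} [CommRing K] (e : K ≃+* F4) {k n : ℕ}

theorem wt_ringEquiv_comp [DecidableEq K] (x : Fin n → K) :
    wt (fun i => e (x i)) = hammingNorm x := by
  rw [← hammingNorm_comp (fun _ => e) (fun _ => e.injective) (fun _ => map_zero e)]
  simp only [wt, hammingNorm]

theorem hermInner_ringEquiv_comp (x y : Fin n → K) :
    hermInner (fun i => e (x i)) (fun i => e (y i)) = e (x ⬝ᵥ y ^ 2) := by
  simp [hermInner, dotProduct, map_sum]

theorem vecMul_map_ringEquiv (G : Matrix (Fin k) (Fin n) K) (y : Fin k → F4) :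
    y ᵥ* G.map e = fun j => e (((fun i => e.symm (y i)) ᵥ* G) j) := by
  ext j
  simp [vecMul, dotProduct, map_sum]

theorem generatesHermLCD_map (G : Matrix (Fin k) (Fin n) K)
    (hG : ∀ y, (∀ i, (y ᵥ* G) ⬝ᵥ G i ^ 2 = 0) → y = 0) : GeneratesHermLCD (G.map e) := by
  intro y hy
  have h := hG (fun i => e.symm (y i)) fun i => e.injective <| by
    rw [map_zero, ← hermInner_ringEquiv_comp, ← vecMul_map_ringEquiv]
    exact hy i
  ext i
  simpa using congrFun h i

theorem wt_vecMul_map_of_hammingNorm [DecidableEq K] {P : ℕ → Prop} (G : Matrix (Fin k) (Fin n) K)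
    (h : ∀ y, y ≠ 0 → P (hammingNorm (y ᵥ* G))) (y : Fin k → F4) (hy : y ≠ 0) :
    P (wt (y ᵥ* G.map e)) := by
  rw [vecMul_map_ringEquiv, wt_ringEquiv_comp]
  exact h _ fun h0 => hy (funext fun i => by simpa using congrFun h0 i)

theorem hermInner_map_rows (S : Matrix (Fin k) (Fin n) K) (h : ∀ i j, S i ⬝ᵥ S j ^ 2 = 0)
    (i j : Fin k) : hermInner (S.map e i) (S.map e j) = 0 :=
  (hermInner_ringEquiv_comp e (S i) (S j)).trans (by rw [h, map_zero])

end Transport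

section Orthonormal

variable {n k : ℕ}

def IsHermOrthonormal (v : Fin k → Fin n → F4) : Prop :=
  ∀ i j, hermInner (v i) (v j) = if i = j then 1 else 0

theorem IsHermOrthonormal.hermInner_sum_smul {v : Fin k → Fin n → F4} (hv : IsHermOrthonormal v)
    (a : Fin k → F4) (i : Fin k) : hermInner (∑ j, a j • v j) (v i) = a i := by
  simp [hermInner_sum_left, hermInner_smul_left, hv _ i]

theorem IsHermOrthonormal.hermInner_sum_smul_self {v : Fin k → Fin n → F4}
    (hv : IsHermOrthonormal v) (a : Fin k → F4) :
    hermInner (∑ j, a j • v j) (∑ j, a j • v j) = hermInner a a := by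
  simp only [hermInner_sum_right, hermInner_smul_right, hv.hermInner_sum_smul]
  exact Finset.sum_congr rfl fun i _ => mul_comm (a i ^ 2) (a i)

noncomputable def hermCoeffs (v : Fin k → Fin n → F4) : (Fin n → F4) →ₗ[F4] Fin k → F4 where
  toFun x i := hermInner x (v i)
  map_add' x x' := funext fun i => hermInner_add_left x x' (v i)
  map_smul' a x := funext fun i => hermInner_smul_left a x (v i)

theorem IsHermLCD.exists_unit_orthogonal {C : Submodule F4 (Fin n → F4)} (hC : IsHermLCD C)
    {v : Fin k → Fin n → F4} (hvC : ∀ i, v i ∈ C) (hv : IsHermOrthonormal v)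
    (hk : k < Module.finrank F4 C) :
    ∃ w ∈ C, (∀ i, hermInner w (v i) = 0) ∧ hermInner w w = 1 := by
  set P := C ⊓ LinearMap.ker (hermCoeffs v)
  have hP : ∀ {w}, w ∈ P ↔ w ∈ C ∧ ∀ i, hermInner w (v i) = 0 := by
    simp [P, funext_iff, hermCoeffs]
  obtain ⟨w₀, hw₀P, hw₀⟩ : ∃ w ∈ P, w ≠ 0 := by
    obtain ⟨⟨w, hwC⟩, hw, hw₀⟩ := (Submodule.ne_bot_iff _).mp
      (LinearMap.ker_ne_bot_of_finrank_lt (f := (hermCoeffs v).domRestrict C) (by simpa using hk))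
    refine ⟨w, hP.mpr ⟨hwC, fun i => ?_⟩, fun h => hw₀ (by simp [h])⟩
    simpa [hermCoeffs] using congrFun hw i
  -- Otherwise `P` is totally isotropic, so `w₀` is orthogonal to `P` and to `v`, which span `C`.
  by_contra! hno
  have hiso : ∀ w ∈ P, hermInner w w = 0 := fun w hw =>
    (hermInner_self_eq_zero_or_one w).resolve_right (hno w (hP.mp hw).1 (hP.mp hw).2)
  refine hw₀ (hC w₀ (hP.mp hw₀P).1 fun z hz => ?_)
  set c := fun i => hermInner z (v i)
  have hp : z - ∑ i, c i • v i ∈ P := by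
    refine hP.mpr ⟨C.sub_mem hz (C.sum_mem fun i _ => C.smul_mem _ (hvC i)), fun i => ?_⟩
    rw [hermInner_sub_left, hv.hermInner_sum_smul, sub_self]
  calc hermInner w₀ z
      = hermInner w₀ (z - ∑ i, c i • v i) + ∑ i, c i ^ 2 * hermInner w₀ (v i) := by
        conv_lhs => rw [← sub_add_cancel z (∑ i, c i • v i)]
        simp only [hermInner_add_right, hermInner_sum_right, hermInner_smul_right]
    _ = 0 := by simp [hermInner_eq_zero_of_isotropic P hiso hw₀P hp, (hP.mp hw₀P).2]

theorem IsHermLCD.exists_orthonormal {C : Submodule F4 (Fin n → F4)} (hC : IsHermLCD C)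
    (hk : k ≤ Module.finrank F4 C) :
    ∃ v : Fin k → Fin n → F4, (∀ i, v i ∈ C) ∧ IsHermOrthonormal v := by
  induction k with
  | zero => exact ⟨Fin.elim0, fun i => i.elim0, fun i => i.elim0⟩
  | succ k ih =>
    obtain ⟨v, hvC, hv⟩ := ih (by omega)
    obtain ⟨w, hwC, hwv, hww⟩ := hC.exists_unit_orthogonal hvC hv (by omega)
    refine ⟨Fin.snoc v w, fun i => ?_, fun i j => ?_⟩
    · induction i using Fin.lastCases <;> simp [hwC, hvC]
    · induction i using Fin.lastCases <;> induction j using Fin.lastCases <;>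
        simp [hww, hwv, hv _ _, hermInner_swap w, Fin.castSucc_ne_last,
          (Fin.castSucc_ne_last _).symm]

theorem IsHermLCD.card_even_wt {C : Submodule F4 (Fin n → F4)} (hC : IsHermLCD C) :
    Fintype.card {c : C // Even (wt (c : Fin n → F4))} =
      Fintype.card {a : Fin (Module.finrank F4 C) → F4 // Even (wt a)} := by
  obtain ⟨v, hvC, hv⟩ := hC.exists_orthonormal le_rfl
  let φ : (Fin (Module.finrank F4 C) → F4) → C :=
    fun a => ⟨∑ i, a i • v i, C.sum_mem fun i _ => C.smul_mem _ (hvC i)⟩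
  have hφ : Function.Bijective φ := by
    rw [Fintype.bijective_iff_injective_and_card]
    refine ⟨fun a b hab => funext fun i => ?_, ?_⟩
    · rw [← hv.hermInner_sum_smul a i, ← hv.hermInner_sum_smul b i]
      exact congrArg (hermInner · (v i)) (congrArg Subtype.val hab)
    · rw [Module.card_eq_pow_finrank (K := F4) (V := C), Fintype.card_fun, Fintype.card_fin]
  refine (Fintype.card_congr (Equiv.subtypeEquiv (Equiv.ofBijective φ hφ) fun a => ?_)).symm
  simp [φ, even_wt_iff, hv.hermInner_sum_smul_self]

theorem card_even_wt_fin_three : Fintype.card {a : Fin 3 → F4 // Even (wt a)} = 28 := by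
  rw [← show Fintype.card {a : Fin 3 → K4 // Even (hammingNorm a)} = 28 by decide]
  refine (Fintype.card_congr (Equiv.subtypeEquiv
    (Equiv.piCongrRight fun _ => K4.equivF4.toEquiv) fun a => ?_)).symm
  change _ ↔ Even (wt fun i => K4.equivF4 (a i))
  rw [wt_ringEquiv_comp]

end Orthonormal

section UpperBound

theorem card_filter_ne_zero_mul_add_le {K V : Type*} [Field K] [Fintype K] [AddCommGroup V]
    [Module K V] [Fintype V] [DecidableEq K] (f : V →ₗ[K] K) :
    #{v | f v ≠ 0} * Fintype.card K + Fintype.card V ≤ Fintype.card V * Fintype.card K := by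
  by_cases hf : f = 0
  · simpa [hf] using Nat.le_mul_of_pos_right _ Fintype.card_pos
  obtain ⟨v₀, hv₀⟩ : ∃ v, f v ≠ 0 := by
    by_contra! h
    exact hf (LinearMap.ext h)
  have hsurj : Function.Surjective f := fun c => ⟨(c / f v₀) • v₀, by simp [hv₀]⟩
  have hker : Fintype.card (LinearMap.ker f) * Fintype.card K = Fintype.card V := by
    have h := f.finrank_range_add_finrank_ker
    rw [LinearMap.range_eq_top.mpr hsurj, finrank_top, Module.finrank_self] at h
    rw [Module.card_eq_pow_finrank (K := K) (V := LinearMap.ker f),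
      Module.card_eq_pow_finrank (K := K) (V := V), ← h, pow_add, pow_one, mul_comm]
  have hsplit : #{v | f v ≠ 0} + Fintype.card (LinearMap.ker f) = Fintype.card V := by
    rw [Fintype.card_subtype, add_comm]
    simpa using Finset.card_filter_add_card_filter_not (s := Finset.univ) (fun v => f v = 0)
  refine le_of_eq ?_
  calc #{v | f v ≠ 0} * Fintype.card K + Fintype.card V
      = (#{v | f v ≠ 0} + Fintype.card (LinearMap.ker f)) * Fintype.card K := by
        rw [add_mul, hker]
    _ = Fintype.card V * Fintype.card K := by rw [hsplit]

variable {n : ℕ}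

theorem sum_wt_mul_four_add_le (C : Submodule F4 (Fin n → F4)) :
    (∑ c : C, wt (c : Fin n → F4)) * 4 + n * Fintype.card C ≤ n * Fintype.card C * 4 := by
  have hcoord : ∀ j, #{c : C | (c : Fin n → F4) j ≠ 0} * 4 + Fintype.card C ≤
      Fintype.card C * 4 := fun j => by
    have h := card_filter_ne_zero_mul_add_le ((LinearMap.proj j).comp C.subtype)
    rw [card_F4] at h
    convert h using 3
    congr!
  have hsum : ∑ c : C, wt (c : Fin n → F4) = ∑ j, #{c : C | (c : Fin n → F4) j ≠ 0} := by
    simp only [wt, Finset.card_filter]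
    exact Finset.sum_comm
  calc (∑ c : C, wt (c : Fin n → F4)) * 4 + n * Fintype.card C
      = ∑ j : Fin n, (#{c : C | (c : Fin n → F4) j ≠ 0} * 4 + Fintype.card C) := by
        simp [hsum, Finset.sum_mul, Finset.sum_add_distrib]
    _ ≤ ∑ _j : Fin n, Fintype.card C * 4 := Finset.sum_le_sum fun j _ => hcoord j
    _ = n * Fintype.card C * 4 := by simp [mul_assoc]

theorem card_mul_le_sum_of_mod_two {ι : Type*} (s : Finset ι) (f : ι → ℕ) {D r : ℕ}
    (h : ∀ i ∈ s, D ≤ f i ∧ f i % 2 = r) : #s * (D + (D + r) % 2) ≤ ∑ i ∈ s, f i := by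
  simpa using Finset.card_nsmul_le_sum s f _ fun i hi => by have := h i hi; omega

theorem IsHermLCD.weight_bound {C : Submodule F4 (Fin n → F4)} (hC : IsHermLCD C)
    (h3 : Module.finrank F4 C = 3) {D : ℕ} (hD : ∀ x ∈ C, x ≠ 0 → D ≤ wt x) :
    63 * D + 27 + 9 * ((D + 1) % 2) ≤ 48 * n := by
  have hcard : Fintype.card C = 64 := by
    rw [Module.card_eq_pow_finrank (K := F4), card_F4, h3]; rfl
  set E := Finset.univ.filter fun c : C => Even (wt (c : Fin n → F4))
  have hE : #E = 28 := by
    rw [← card_even_wt_fin_three, ← h3, ← hC.card_even_wt, Fintype.card_subtype]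
  have h0 : (0 : C) ∈ E := by simp [E, wt]
  have hEven := card_mul_le_sum_of_mod_two (E.erase 0) (fun c : C => wt (c : Fin n → F4))
    (D := D) (r := 0) fun c hc => by
      obtain ⟨hc0, hcE⟩ := Finset.mem_erase.mp hc
      exact ⟨hD c c.2 (by simpa using hc0), Nat.even_iff.mp (Finset.mem_filter.mp hcE).2⟩
  have hOdd := card_mul_le_sum_of_mod_two Eᶜ (fun c : C => wt (c : Fin n → F4))
    (D := D) (r := 1) fun c hc => by
      have hodd : ¬Even (wt (c : Fin n → F4)) := by simpa [E] using hc
      exact ⟨hD c c.2 fun h => hodd (by simp [h, wt]), Nat.not_even_iff.mp hodd⟩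
  rw [Finset.card_erase_of_mem h0, hE] at hEven
  rw [Finset.card_compl, hcard, hE] at hOdd
  have herase := Finset.add_sum_erase E (fun c : C => wt (c : Fin n → F4)) h0
  have hsplit := Finset.sum_add_sum_compl E fun c : C => wt (c : Fin n → F4)
  have hsum := sum_wt_mul_four_add_le C
  have hparity : (D + 0) % 2 + (D + 1) % 2 = 1 := by omega
  rw [hcard] at hsum
  omega

theorem IsHermLCD.exists_wt_le {C : Submodule F4 (Fin n → F4)} (hC : IsHermLCD C)
    (h3 : Module.finrank F4 C = 3) {d : ℕ} (h : 48 * n < 63 * d + 90 + 9 * (d % 2)) :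
    ∃ x ∈ C, x ≠ 0 ∧ wt x ≤ d := by
  by_contra! hlt
  have := hC.weight_bound h3 (D := d + 1) fun x hx hx0 => hlt x hx hx0
  rw [show (d + 1 + 1) % 2 = d % 2 by omega] at this
  omega

end UpperBound

namespace K4

def gen11 : Matrix (Fin 3) (Fin 11) K4 :=
  !![1, 1, 0, 1, 1, 0, 1, 0, 1, 0, 1;
     ω', ω, 1, ω', ω', 1, 1, 1, ω, 1, 1;
     ω, ω, ω', 1, 0, ω, 1, 0, 0, 1, ω']

def gen16 : Matrix (Fin 3) (Fin 16) K4 :=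
  !![1, 0, 1, 1, 1, 0, 1, 1, 0, 1, 1, 1, 1, 1, 1, 0;
     ω', 0, 0, 0, ω, 1, 1, ω, 1, 0, 1, 0, ω, 1, ω', 1;
     ω, 1, ω', ω, ω', ω, ω', 0, ω', ω, ω, 1, 1, 0, 1, ω']

def gen20 : Matrix (Fin 3) (Fin 20) K4 :=
  !![1, 1, 1, 1, 1, 1, 1, 1, 1, 1, 1, 1, 1, 1, 1, 1, 1, 1, 0, 1;
     ω', ω, ω, 1, 1, ω', ω', ω, ω, ω', ω, ω, 0, 0, 1, 1, ω', ω', 1, 1;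
     ω, ω', 0, 1, 1, ω', 1, ω, ω, 0, 0, 1, 1, 0, 0, ω, 1, ω, ω', ω']

-- The columns represent the 21 points of the projective plane over `F4`.
def simplex21 : Matrix (Fin 3) (Fin 21) K4 :=
  !![0, 0, 0, 0, 0, 1, 1, 1, 1, 1, 1, 1, 1, 1, 1, 1, 1, 1, 1, 1, 1;
     0, 1, 1, 1, 1, 0, 0, 0, 0, 1, 1, 1, 1, ω, ω, ω, ω, ω', ω', ω', ω';
     1, 0, 1, ω, ω', 0, 1, ω, ω', 0, 1, ω, ω', 0, 1, ω, ω', 0, 1, ω, ω']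

theorem gen11_lcd : ∀ y : Fin 3 → K4, (∀ i, (y ᵥ* gen11) ⬝ᵥ gen11 i ^ 2 = 0) → y = 0 := by
  decide

theorem gen11_wt : ∀ y : Fin 3 → K4, y ≠ 0 → 7 ≤ hammingNorm (y ᵥ* gen11) := by
  decide

theorem gen16_lcd : ∀ y : Fin 3 → K4, (∀ i, (y ᵥ* gen16) ⬝ᵥ gen16 i ^ 2 = 0) → y = 0 := by
  decide

theorem gen16_wt : ∀ y : Fin 3 → K4, y ≠ 0 → 11 ≤ hammingNorm (y ᵥ* gen16) := by
  decide

theorem gen20_lcd : ∀ y : Fin 3 → K4, (∀ i, (y ᵥ* gen20) ⬝ᵥ gen20 i ^ 2 = 0) → y = 0 := by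
  decide

theorem gen20_wt : ∀ y : Fin 3 → K4, y ≠ 0 → 14 ≤ hammingNorm (y ᵥ* gen20) := by
  decide

theorem simplex21_orth : ∀ i j, simplex21 i ⬝ᵥ simplex21 j ^ 2 = 0 := by
  decide

theorem simplex21_wt : ∀ y : Fin 3 → K4, y ≠ 0 → hammingNorm (y ᵥ* simplex21) = 16 := by
  decide

end K4

theorem d4Is_lengthen {m d : ℕ} (G : Matrix (Fin 3) (Fin m) K4)
    (hG : ∀ y, (∀ i, (y ᵥ* G) ⬝ᵥ G i ^ 2 = 0) → y = 0)
    (hd : ∀ y, y ≠ 0 → d ≤ hammingNorm (y ᵥ* G)) (s : ℕ)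
    (hn : 48 * (21 * s + m) < 63 * (16 * s + d) + 90 + 9 * ((16 * s + d) % 2)) :
    d4Is (21 * s + m) 3 (16 * s + d) := by
  obtain ⟨G', hG', hd'⟩ := exists_generator_lengthen
    (hermInner_map_rows K4.equivF4 _ K4.simplex21_orth)
    (wt_vecMul_map_of_hammingNorm (P := (· = 16)) K4.equivF4 _ K4.simplex21_wt)
    (generatesHermLCD_map K4.equivF4 G hG)
    (wt_vecMul_map_of_hammingNorm (P := (d ≤ ·)) K4.equivF4 G hd) s
  exact d4Is_of_generator hG' hd' fun C h3 hC => hC.exists_wt_le h3 hn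

/-- `d₄(21s+11,3) = 16s+7`, `d₄(21s+16,3) = 16s+11`,
`d₄(21s+20,3) = 16s+14` for every nonnegative integer `s`. -/
theorem stmt17 (s : ℕ) :
    d4Is (21 * s + 11) 3 (16 * s + 7) ∧
    d4Is (21 * s + 16) 3 (16 * s + 11) ∧
    d4Is (21 * s + 20) 3 (16 * s + 14) :=
  ⟨d4Is_lengthen K4.gen11 K4.gen11_lcd K4.gen11_wt s (by omega),
    d4Is_lengthen K4.gen16 K4.gen16_lcd K4.gen16_wt s (by omega),
    d4Is_lengthen K4.gen20 K4.gen20_lcd K4.gen20_wt s (by omega)⟩
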